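/- For all f, b ∈ L^p(I) with 1 ≤ p ≤ ∞, the distance between f and its fractal convolution with b satisfies ‖(f *_T b) − f‖_p ≤ (Λ/(1−Λ)) ‖f − b‖_p. -/

import Mathlib

open MeasureTheory ENNReal

noncomputable section

/-- The inverse of the increasing affine map `L n` sending `[x 0, x N]` onto
`[x n, x (n+1)]` (so `L n (x 0) = x n.castSucc` and `L n (x N) = x n.succ`). -/
def Linv {N : ℕ} (x : Fin (N + 1) → ℝ) (n : Fin N) (y : ℝ) : ℝ :=
  x 0 + (y - x n.castSucc) * (x (Fin.last N) - x 0) / (x n.succ - x n.castSucc)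

/-- The subinterval `I n` of the partition: `[x 0, x 1]` for `n = 0` and
`(x n, x (n+1)]` otherwise. -/
def subInt {N : ℕ} (x : Fin (N + 1) → ℝ) (n : Fin N) : Set ℝ :=
  if n.val = 0 then Set.Icc (x n.castSucc) (x n.succ)
  else Set.Ioc (x n.castSucc) (x n.succ)

/-- `h` is the image of `g` under the Read–Bajraktarević operator `T_{f,b}` with
scale functions `α`, almost everywhere: on each `I n`,
`h = f + (α n ∘ Lₙ⁻¹) · ((g - b) ∘ Lₙ⁻¹)`. -/
def RBEq {N : ℕ} (μ : Measure ℝ) (x : Fin (N + 1) → ℝ) (α : Fin N → ℝ → ℝ)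
    (f b g h : ℝ → ℝ) : Prop :=
  ∀ n : Fin N, ∀ᵐ t ∂μ, t ∈ subInt x n →
    h t = f t + α n (Linv x n t) * (g (Linv x n t) - b (Linv x n t))

/-- `h` satisfies the self-referential equation of `T_{f,b}`, i.e. `h` is a fixed
point of `T_{f,b}`. -/
def SelfRef {N : ℕ} (μ : Measure ℝ) (x : Fin (N + 1) → ℝ) (α : Fin N → ℝ → ℝ)
    (f b h : ℝ → ℝ) : Prop :=
  RBEq μ x α f b h h

/-!
On the piece `I n` the self-referential equation reads
`fb - f = (α n ∘ Lₙ⁻¹) · ((fb - b) ∘ Lₙ⁻¹)`. The map `Lₙ⁻¹` pushes Lebesgue measure on `I n`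
forward to `|I n| / |I|` times Lebesgue measure on `I`, and these weights add up to `1`, so
summing the `p`-th powers over the pieces (or taking essential suprema when `p = ∞`) gives
`‖fb - f‖_p ≤ Λ ‖fb - b‖_p ≤ Λ (‖fb - f‖_p + ‖f - b‖_p)`; solve for `‖fb - f‖_p`.
-/

open Set

theorem Fin.sum_univ_succ_sub_castSucc {M : Type*} [AddCommGroup M] {N : ℕ}
    (f : Fin (N + 1) → M) : ∑ i : Fin N, (f i.succ - f i.castSucc) = f (Fin.last N) - f 0 := by
  cases N with
  | zero => simp
  | succ N => rw [← Finset.Iic_top (α := Fin (N + 1)), Fin.sum_Iic_sub]; rfl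

theorem StrictMono.apply_zero_lt_apply_last {α : Type*} [Preorder α] {N : ℕ}
    {x : Fin (N + 1) → α} (hx : StrictMono x) (n : Fin N) : x 0 < x (Fin.last N) :=
  hx ((Fin.zero_le n.castSucc).trans_lt (Fin.castSucc_lt_last n))

theorem Monotone.iUnion_Ioc_castSucc_succ {α : Type*} [LinearOrder α] {N : ℕ}
    {x : Fin (N + 1) → α} (hx : Monotone x) :
    ⋃ n : Fin N, Ioc (x n.castSucc) (x n.succ) = Ioc (x 0) (x (Fin.last N)) := by
  rw [← hx.biUnion_Ico_Ioc_map_succ 0 (Fin.last N)]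
  ext t
  simp only [mem_iUnion, mem_Ico, exists_prop]
  constructor
  · rintro ⟨n, ht⟩
    exact ⟨n.castSucc, ⟨Fin.zero_le _, Fin.castSucc_lt_last n⟩, by rwa [Fin.orderSucc_castSucc]⟩
  · rintro ⟨i, ⟨-, hi⟩, ht⟩
    obtain ⟨n, rfl⟩ := Fin.exists_castSucc_eq.2 hi.ne
    exact ⟨n, by rwa [← Fin.orderSucc_castSucc]⟩

theorem Monotone.pairwise_disjoint_on_Ioc_castSucc_succ {α : Type*} [Preorder α] {N : ℕ}
    {x : Fin (N + 1) → α} (hx : Monotone x) :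
    Pairwise (Function.onFun Disjoint fun n : Fin N => Ioc (x n.castSucc) (x n.succ)) :=
  fun m n hmn => by
    simpa only [Function.onFun, Fin.orderSucc_castSucc] using
      hx.pairwise_disjoint_on_Ioc_succ ((Fin.castSucc_injective N).ne hmn)

theorem measurableEmbedding_affine {a c s : ℝ} (hs : s ≠ 0) :
    MeasurableEmbedding fun y : ℝ => c + (y - a) * s :=
  ((Homeomorph.subRight a).trans ((Homeomorph.mulRight₀ s hs).trans
    (Homeomorph.addLeft c))).measurableEmbedding

theorem preimage_affine_Ioc {a b c d : ℝ} (hab : a < b) (hcd : c < d) :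
    (fun y : ℝ => c + (y - a) * ((d - c) / (b - a))) ⁻¹' Ioc c d = Ioc a b := by
  have hdc : 0 < d - c := sub_pos.2 hcd
  have hs : 0 < (d - c) / (b - a) := div_pos hdc (sub_pos.2 hab)
  ext y
  simp only [mem_preimage, mem_Ioc, lt_add_iff_pos_right, ← le_sub_iff_add_le']
  rw [mul_pos_iff_of_pos_right hs, sub_pos, ← le_div_iff₀ hs, div_div_cancel₀ hdc.ne',
    sub_le_sub_iff_right]

theorem Real.map_volume_affine {a c s : ℝ} (hs : s ≠ 0) :
    volume.map (fun y : ℝ => c + (y - a) * s) = ENNReal.ofReal |s⁻¹| • volume := by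
  have hcomp : (fun y : ℝ => c + (y - a) * s) = (c + ·) ∘ (· * s) ∘ (· - a) := rfl
  rw [hcomp, ← Measure.map_map (by fun_prop) (by fun_prop),
    ← Measure.map_map (by fun_prop) (by fun_prop), map_sub_right_eq_self,
    Real.map_volume_mul_right hs, Measure.map_smul, map_add_left_eq_self]

theorem Real.map_volume_restrict_Ioc_affine {a b c d : ℝ} (hab : a < b) (hcd : c < d) :
    (volume.restrict (Ioc a b)).map (fun y => c + (y - a) * ((d - c) / (b - a))) =
      ENNReal.ofReal ((b - a) / (d - c)) • volume.restrict (Ioc c d) := by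
  have hs : 0 < (d - c) / (b - a) := div_pos (sub_pos.2 hcd) (sub_pos.2 hab)
  rw [← preimage_affine_Ioc hab hcd, ← (measurableEmbedding_affine hs.ne').restrict_map,
    Real.map_volume_affine hs.ne', Measure.restrict_smul, abs_of_pos (inv_pos.2 hs), inv_div]

section SumMeasure

variable {α β ε ε' ι : Type*} [MeasurableSpace α] [MeasurableSpace β] [Countable ι]
  [ENorm ε] [TopologicalSpace ε'] [ContinuousENorm ε'] {p : ℝ≥0∞}

theorem eLpNorm_sum_measure_le_sum_measure {μ : ι → Measure α} {ν : ι → Measure β}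
    {f : α → ε} {g : β → ε'} (h : ∀ i, eLpNorm f p (μ i) ≤ eLpNorm g p (ν i)) :
    eLpNorm f p (Measure.sum μ) ≤ eLpNorm g p (Measure.sum ν) := by
  rcases eq_or_ne p 0 with rfl | hp0
  · simp
  rcases eq_or_ne p ∞ with rfl | hptop
  · rw [eLpNorm_exponent_top]
    refine essSup_le_of_ae_le _ (Measure.ae_sum_iff.2 fun i => ?_)
    filter_upwards [ae_le_eLpNormEssSup (f := f) (μ := μ i)] with t ht
    calc ‖f t‖ₑ ≤ eLpNorm f ∞ (μ i) := ht
      _ ≤ eLpNorm g ∞ (ν i) := h i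
      _ ≤ eLpNorm g ∞ (Measure.sum ν) := eLpNorm_mono_measure _ (Measure.le_sum ν i)
  have hq : 0 < p.toReal := ENNReal.toReal_pos hp0 hptop
  have hpow : ∀ i, ∫⁻ t, ‖f t‖ₑ ^ p.toReal ∂μ i ≤ ∫⁻ u, ‖g u‖ₑ ^ p.toReal ∂ν i := fun i => by
    simpa only [lintegral_rpow_enorm_eq_rpow_eLpNorm' hq, ← eLpNorm_eq_eLpNorm' hp0 hptop]
      using ENNReal.rpow_le_rpow (h i) hq.le
  rw [eLpNorm_eq_lintegral_rpow_enorm_toReal hp0 hptop,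
    eLpNorm_eq_lintegral_rpow_enorm_toReal hp0 hptop, lintegral_sum_measure, lintegral_sum_measure]
  gcongr with i
  exact hpow i

theorem eLpNorm_sum_measure_le_of_ae_enorm_le_comp {μ : ι → Measure α} {ν : Measure β}
    {φ : ι → α → β} (hφ : ∀ i, MeasurableEmbedding (φ i))
    (hν : Measure.sum (fun i => (μ i).map (φ i)) ≤ ν) {f : α → ε} {g : β → ε'}
    (h : ∀ i, ∀ᵐ t ∂μ i, ‖f t‖ₑ ≤ ‖g (φ i t)‖ₑ) :
    eLpNorm f p (Measure.sum μ) ≤ eLpNorm g p ν :=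
  (eLpNorm_sum_measure_le_sum_measure fun i =>
    (eLpNorm_mono_enorm_ae (h i)).trans_eq ((hφ i).eLpNorm_map_measure).symm).trans
    (eLpNorm_mono_measure g hν)

end SumMeasure

theorem MeasureTheory.Lp.ae_norm_le_norm {α E : Type*} [MeasurableSpace α] {μ : Measure α}
    [NormedAddCommGroup E] (f : Lp E ∞ μ) : ∀ᵐ t ∂μ, ‖f t‖ ≤ ‖f‖ := by
  filter_upwards [ae_le_eLpNormEssSup (f := ⇑f) (μ := μ)] with t ht
  rwa [← eLpNorm_exponent_top, ← Lp.enorm_def, ← ofReal_norm, ← ofReal_norm,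
    ofReal_le_ofReal_iff (norm_nonneg _)] at ht

theorem dist_le_div_one_sub_mul_of_dist_le_mul {X : Type*} [PseudoMetricSpace X] {h f b : X}
    {Λ : ℝ} (hΛ0 : 0 ≤ Λ) (hΛ : Λ < 1) (hhf : dist h f ≤ Λ * dist h b) :
    dist h f ≤ Λ / (1 - Λ) * dist f b := by
  rw [div_mul_eq_mul_div, le_div_iff₀ (sub_pos.2 hΛ)]
  nlinarith [mul_le_mul_of_nonneg_left (dist_triangle h f b) hΛ0]

section Partition

variable {N : ℕ} {x : Fin (N + 1) → ℝ}

theorem measurableSet_subInt (n : Fin N) : MeasurableSet (subInt x n) := by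
  unfold subInt; split_ifs <;> measurability

theorem subInt_ae_eq_Ioc (n : Fin N) :
    subInt x n =ᵐ[volume] Ioc (x n.castSucc) (x n.succ) := by
  unfold subInt; split_ifs
  · exact Ioc_ae_eq_Icc.symm
  · rfl

theorem volume_restrict_Icc_eq_sum_subInt (hx : Monotone x) :
    volume.restrict (Icc (x 0) (x (Fin.last N))) =
      Measure.sum fun n => volume.restrict (subInt x n) := by
  rw [Measure.restrict_congr_set Ioc_ae_eq_Icc.symm, ← hx.iUnion_Ioc_castSucc_succ,
    Measure.restrict_iUnion hx.pairwise_disjoint_on_Ioc_castSucc_succ fun _ => measurableSet_Ioc]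
  simp_rw [Measure.restrict_congr_set (subInt_ae_eq_Ioc _)]

theorem Linv_eq_affine (n : Fin N) :
    Linv x n = fun y => x 0 + (y - x n.castSucc) *
      ((x (Fin.last N) - x 0) / (x n.succ - x n.castSucc)) := by
  funext y; rw [Linv, mul_div_assoc]

theorem measurableEmbedding_Linv (hx : StrictMono x) (n : Fin N) :
    MeasurableEmbedding (Linv x n) :=
  Linv_eq_affine n ▸ measurableEmbedding_affine (div_pos (sub_pos.2 (hx.apply_zero_lt_apply_last n))
    (sub_pos.2 (hx (Fin.castSucc_lt_succ (i := n))))).ne'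

theorem map_Linv_volume_restrict_subInt (hx : StrictMono x) (n : Fin N) :
    (volume.restrict (subInt x n)).map (Linv x n) =
      ENNReal.ofReal ((x n.succ - x n.castSucc) / (x (Fin.last N) - x 0)) •
        volume.restrict (Icc (x 0) (x (Fin.last N))) := by
  rw [Measure.restrict_congr_set (subInt_ae_eq_Ioc n), Linv_eq_affine,
    Real.map_volume_restrict_Ioc_affine (hx (Fin.castSucc_lt_succ (i := n)))
      (hx.apply_zero_lt_apply_last n),
    Measure.restrict_congr_set Ioc_ae_eq_Icc]

theorem sum_map_Linv_volume_restrict_subInt_le (hx : StrictMono x) :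
    Measure.sum (fun n => (volume.restrict (subInt x n)).map (Linv x n)) ≤
      volume.restrict (Icc (x 0) (x (Fin.last N))) := by
  have hweights : ∑ n : Fin N,
      ENNReal.ofReal ((x n.succ - x n.castSucc) / (x (Fin.last N) - x 0)) ≤ 1 := by
    rw [← ENNReal.ofReal_sum_of_nonneg fun n _ =>
        div_nonneg (sub_nonneg.2 (hx.monotone (Fin.castSucc_le_succ n)))
          (sub_nonneg.2 (hx.monotone (Fin.zero_le _))),
      ← Finset.sum_div, Fin.sum_univ_succ_sub_castSucc]
    exact ENNReal.ofReal_le_one.2 (div_self_le_one _)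
  refine Measure.le_iff.2 fun s hs => ?_
  simp_rw [Measure.sum_apply _ hs, map_Linv_volume_restrict_subInt hx, Measure.smul_apply,
    smul_eq_mul, ENNReal.tsum_mul_right, tsum_fintype]
  exact mul_le_of_le_one_left' hweights

theorem SelfRef.ae_enorm_sub_le_comp (hx : StrictMono x) {α : Fin N → ℝ → ℝ} {f b h : ℝ → ℝ}
    (hh : SelfRef (volume.restrict (Icc (x 0) (x (Fin.last N)))) x α f b h) {C : ℝ} (hC : 0 ≤ C)
    (hα : ∀ n, ∀ᵐ u ∂volume.restrict (Icc (x 0) (x (Fin.last N))), ‖α n u‖ ≤ C) (n : Fin N) :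
    ∀ᵐ t ∂volume.restrict (subInt x n), ‖(h - f) t‖ₑ ≤ ‖(C • (h - b)) (Linv x n t)‖ₑ := by
  have hle : volume.restrict (subInt x n) ≤ volume.restrict (Icc (x 0) (x (Fin.last N))) :=
    volume_restrict_Icc_eq_sum_subInt hx.monotone ▸ Measure.le_sum _ n
  have hαL : ∀ᵐ t ∂volume.restrict (subInt x n), ‖α n (Linv x n t)‖ ≤ C :=
    ae_of_ae_map (measurableEmbedding_Linv hx n).measurable.aemeasurable
      (ae_mono ((Measure.le_sum _ n).trans (sum_map_Linv_volume_restrict_subInt_le hx)) (hα n))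
  filter_upwards [ae_mono hle (hh n), ae_restrict_mem (measurableSet_subInt n), hαL]
    with t ht hmem hαt
  rw [enorm_le_iff_norm_le, Pi.sub_apply, ht hmem, add_sub_cancel_left, Pi.smul_apply,
    Pi.sub_apply, smul_eq_mul, norm_mul, norm_mul, Real.norm_of_nonneg hC]
  gcongr

end Partition

theorem fractal_convolution_distance_to_seed_general
    (N : ℕ) (x : Fin (N + 1) → ℝ) (hx : StrictMono x)
    (μ : Measure ℝ) (hμ : μ = volume.restrict (Set.Icc (x 0) (x (Fin.last N))))
    (p : ℝ≥0∞) [Fact (1 ≤ p)]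
    (α : Fin N → Lp ℝ ∞ μ)
    (Λ : ℝ) (hΛdef : Λ = ⨆ n : Fin N, ‖α n‖) (hΛ : Λ < 1)
    (f b fb : Lp ℝ p μ)
    (hfb : SelfRef μ x (fun n => ⇑(α n)) ⇑f ⇑b ⇑fb) :
    ‖fb - f‖ ≤ Λ / (1 - Λ) * ‖f - b‖ := by
  subst hμ
  have hΛ0 : 0 ≤ Λ := hΛdef ▸ Real.iSup_nonneg fun n => norm_nonneg _
  have hα : ∀ n, ∀ᵐ u ∂volume.restrict (Icc (x 0) (x (Fin.last N))), ‖α n u‖ ≤ Λ := fun n =>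
    (Lp.ae_norm_le_norm (α n)).mono fun u hu =>
      hu.trans (hΛdef ▸ le_ciSup (Set.finite_range fun n => ‖α n‖).bddAbove n)
  have hcontr : dist fb f ≤ Λ * dist fb b := by
    have key := eLpNorm_sum_measure_le_of_ae_enorm_le_comp (p := p) (measurableEmbedding_Linv hx)
      (sum_map_Linv_volume_restrict_subInt_le hx) (hfb.ae_enorm_sub_le_comp hx hΛ0 hα)
    rwa [← volume_restrict_Icc_eq_sum_subInt hx.monotone, eLpNorm_const_smul,
      Real.enorm_of_nonneg hΛ0, ← Lp.edist_def, ← Lp.edist_def, edist_dist, edist_dist,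
      ← ofReal_mul hΛ0, ofReal_le_ofReal_iff (by positivity)] at key
  rw [← dist_eq_norm, ← dist_eq_norm]
  exact dist_le_div_one_sub_mul_of_dist_le_mul hΛ0 hΛ hcontr

/-- `‖(f *_T b) − f‖_p ≤ (Λ/(1−Λ)) ‖f − b‖_p`. -/
theorem fractal_convolution_distance_to_seed
    (N : ℕ) (hN : 2 ≤ N) (x : Fin (N + 1) → ℝ) (hx : StrictMono x)
    (μ : Measure ℝ) (hμ : μ = volume.restrict (Set.Icc (x 0) (x (Fin.last N))))
    (p : ℝ≥0∞) [Fact (1 ≤ p)]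
    (α : Fin N → Lp ℝ ∞ μ)
    (Λ : ℝ) (hΛdef : Λ = ⨆ n : Fin N, ‖α n‖) (hΛ : Λ < 1)
    (f b fb : Lp ℝ p μ)
    (hfb : SelfRef μ x (fun n => ⇑(α n)) ⇑f ⇑b ⇑fb) :
    ‖fb - f‖ ≤ Λ / (1 - Λ) * ‖f - b‖ :=
  fractal_convolution_distance_to_seed_general N x hx μ hμ p α Λ hΛdef hΛ f b fb hfb

end
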